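/- If Depth⁺([ℕ]^∞) < 𝔡 then add(𝔛, 𝔇) = 𝔡, and if Depth⁺([ℕ]^∞) = 𝔡 then cf(𝔡) ≤ add(𝔛, 𝔇). -/

import Mathlib

open Cardinal Set

/-- `A` is almost contained in `B`: `A \ B` is finite. -/
def ASub (A B : Set ℕ) : Prop := (A \ B).Finite

/-- A family is linearly quasiordered by `⊆*`. -/
def LinQO (F : Set (Set ℕ)) : Prop := ∀ A ∈ F, ∀ B ∈ F, ASub A B ∨ ASub B A

/-- A centered family of infinite subsets of `ℕ`. -/
def Centered (F : Set (Set ℕ)) : Prop :=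
  (∀ A ∈ F, A.Infinite) ∧
  ∀ G : Finset (Set ℕ), ↑G ⊆ F → G.Nonempty → (⋂ A ∈ G, A).Infinite

/-- `A` is a pseudo-intersection of `F`. -/
def PseudoInt (F : Set (Set ℕ)) (A : Set ℕ) : Prop :=
  A.Infinite ∧ ∀ B ∈ F, ASub A B

/-- The pseudo-intersection number 𝔭. -/
noncomputable def pNum : Cardinal :=
  sInf {c | ∃ F : Set (Set ℕ), Centered F ∧ (¬∃ A, PseudoInt F A) ∧ c = #F}

/-- The tower number 𝔱. -/
noncomputable def tNum : Cardinal :=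
  sInf {c | ∃ F : Set (Set ℕ), (∀ A ∈ F, A.Infinite) ∧ LinQO F ∧
    (¬∃ A, PseudoInt F A) ∧ c = #F}

/-- Eventual dominance `f ≤* g`. -/
def LeStar (f g : ℕ → ℕ) : Prop := {n | g n < f n}.Finite

def UnboundedFam (B : Set (ℕ → ℕ)) : Prop := ¬∃ g, ∀ f ∈ B, LeStar f g

def DominatingFam (D : Set (ℕ → ℕ)) : Prop := ∀ f, ∃ g ∈ D, LeStar f g

/-- The unbounding number 𝔟. -/
noncomputable def bNum : Cardinal := sInf {c | ∃ B, UnboundedFam B ∧ c = #B}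

/-- The dominating number 𝔡. -/
noncomputable def dNum : Cardinal := sInf {c | ∃ D, DominatingFam D ∧ c = #D}

def SplittingFam (S : Set (Set ℕ)) : Prop :=
  ∀ A : Set ℕ, A.Infinite → ∃ s ∈ S, (A ∩ s).Infinite ∧ (A \ s).Infinite

/-- The splitting number 𝔰. -/
noncomputable def sNum : Cardinal := sInf {c | ∃ S, SplittingFam S ∧ c = #S}

/-- `g` avoids middles in `X` with respect to `⟨R,S⟩`. -/
def AvoidsMiddles (R S : ℕ → ℕ → Prop) (g : ℕ → ℕ) (X : Set (ℕ → ℕ)) : Prop :=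
  (∀ f ∈ X, {n | R (f n) (g n)}.Infinite) ∧
  ∀ f ∈ X, ∀ h ∈ X,
    {n | R (f n) (g n) ∧ S (g n) (h n)}.Finite ∨
    {n | R (h n) (g n) ∧ S (g n) (f n)}.Finite

/-- The excluded middle property with respect to `⟨R,S⟩`. -/
def EMP (R S : ℕ → ℕ → Prop) (X : Set (ℕ → ℕ)) : Prop := ∃ g, AvoidsMiddles R S g X

/-- The cardinal 𝔵_{R,S}. -/
noncomputable def xNum (R S : ℕ → ℕ → Prop) : Cardinal :=
  sInf {c | ∃ X : Set (ℕ → ℕ), ¬ EMP R S X ∧ c = #X}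

/-- The class 𝔅 of bounded sets. -/
def ClB (Y : Set (ℕ → ℕ)) : Prop := ∃ g, ∀ f ∈ Y, LeStar f g

/-- The class 𝔛. -/
def ClX (Y : Set (ℕ → ℕ)) : Prop := EMP (· < ·) (· ≤ ·) Y

/-- `Y` is finitely dominating: `maxfin Y` is dominating. -/
def FinDominating (Y : Set (ℕ → ℕ)) : Prop :=
  ∀ f : ℕ → ℕ, ∃ F : Finset (ℕ → ℕ), ↑F ⊆ Y ∧ LeStar f (fun n => F.sup (fun h => h n))

/-- The class 𝔇fin of non finitely-dominating sets. -/
def ClDfin (Y : Set (ℕ → ℕ)) : Prop := ¬ FinDominating Y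

/-- The class 𝔇 of non-dominating sets. -/
def ClD (Y : Set (ℕ → ℕ)) : Prop := ¬ DominatingFam Y

/-- The additivity number add(I, J). -/
noncomputable def addNum (I J : Set (ℕ → ℕ) → Prop) : Cardinal :=
  sInf {c | ∃ Fam : Set (Set (ℕ → ℕ)), (∀ Y ∈ Fam, I Y) ∧ ¬ J (⋃₀ Fam) ∧ c = #Fam}

/-- The Boolean subalgebra of `P(ℕ)` generated by `F`. -/
def genBA (F : Set (Set ℕ)) : Set (Set ℕ) :=
  ⋂₀ {C | F ⊆ C ∧ Set.univ ∈ C ∧ (∀ A ∈ C, Aᶜ ∈ C) ∧ ∀ A ∈ C, ∀ B ∈ C, A ∩ B ∈ C}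

/-- A nonprincipal ultrafilter (every member is infinite). -/
def NonPrincipal (U : Ultrafilter ℕ) : Prop := ∀ S ∈ U, Set.Infinite S

/-- The cofinality of the reduced product `ℕ^ℕ/U`. -/
noncomputable def cofRP (U : Ultrafilter ℕ) : Cardinal :=
  sInf {c | ∃ C : Set (ℕ → ℕ), (∀ f : ℕ → ℕ, ∃ g ∈ C, {n | f n ≤ g n} ∈ U) ∧ c = #C}


/-- Depth⁺([ℕ]^∞): the minimal κ admitting no ⊂*-strictly-decreasing κ-sequence. -/
noncomputable def depthPlus : Cardinal :=
  sInf {κ : Cardinal | ¬∃ A : κ.ord.ToType → Set ℕ,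
    (∀ i, (A i).Infinite) ∧
    ∀ i j, i < j → ASub (A j) (A i) ∧ ¬ ASub (A i) (A j)}

-- auxiliary lemmas

lemma depth_set_nonempty :
    {κ : Cardinal.{0} | ¬∃ A : κ.ord.ToType → Set ℕ,
      (∀ i, (A i).Infinite) ∧
      ∀ i j, i < j → ASub (A j) (A i) ∧ ¬ ASub (A i) (A j)}.Nonempty := by
  refine ⟨Order.succ (2 ^ ℵ₀ : Cardinal.{0}), ?_⟩
  rintro ⟨A, -, h2⟩
  have hinj : Function.Injective A := by
    intro i j hij
    by_contra hne
    rcases lt_or_gt_of_ne hne with h | h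
    · exact (h2 i j h).2 (by rw [hij]; simp [ASub])
    · exact (h2 j i h).2 (by rw [hij]; simp [ASub])
  have hle := Cardinal.mk_le_of_injective (f := A) hinj
  rw [Cardinal.mk_toType, Cardinal.card_ord, Cardinal.mk_set, Cardinal.mk_nat] at hle
  exact absurd hle (Order.lt_succ (2 ^ ℵ₀ : Cardinal.{0})).not_ge

lemma lt_depthPlus_of_chain {α : Type} (r : α → α → Prop) [IsWellOrder α r]
    (A : α → Set ℕ) (hinf : ∀ a, (A a).Infinite)
    (hdec : ∀ a b, r a b → (A b \ A a).Finite ∧ ¬ (A a \ A b).Finite) :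
    #α < depthPlus.{0} := by
  by_contra hle
  push_neg at hle
  have hmem := csInf_mem depth_set_nonempty
  apply hmem
  have h1 : depthPlus.{0}.ord ≤ Ordinal.type r := by
    refine le_trans (Cardinal.ord_le_ord.mpr hle) ?_
    rw [Cardinal.ord_le, Ordinal.card_type]
  haveI inst : IsWellOrder depthPlus.{0}.ord.ToType (· < ·) := isWellOrder_lt
  have h1' : Ordinal.type ((· < ·) : depthPlus.{0}.ord.ToType → depthPlus.{0}.ord.ToType → Prop)
      ≤ Ordinal.type r := by rw [Ordinal.type_toType]; exact h1
  obtain ⟨e⟩ := Ordinal.type_le_iff'.mp h1'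
  refine ⟨fun i => A (e i), fun i => hinf _, fun i j hij => ?_⟩
  exact hdec (e i) (e j) (e.map_rel_iff.mpr hij)

lemma exists_cofinal_chain (Y : Set (ℕ → ℕ)) (hY : ClX Y) :
    ∃ g : ℕ → ℕ, ∃ S : Set (ℕ → ℕ), S ⊆ Y ∧ #S < depthPlus.{0} ∧
      (∀ f ∈ S, {n | f n < g n}.Infinite) ∧
      (∀ f ∈ Y, ∃ s ∈ S, {n | s n < g n ∧ g n ≤ f n}.Finite) := by
  obtain ⟨g, hg1, hg2⟩ := hY
  set Q : (ℕ → ℕ) → (ℕ → ℕ) → Prop := fun f h => {n | h n < g n ∧ g n ≤ f n}.Finite with hQ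
  have Qrefl : ∀ f, Q f f := by
    intro f
    have : {n | f n < g n ∧ g n ≤ f n} = ∅ :=
      Set.eq_empty_iff_forall_notMem.mpr fun n ⟨h1, h2⟩ => absurd h2 (not_le.mpr h1)
    simp only [hQ, this, Set.finite_empty]
  have Qtrans : ∀ {f h k}, Q f h → Q h k → Q f k := by
    intro f h k h1 h2
    have hsub : {n | k n < g n ∧ g n ≤ f n} ⊆
        {n | h n < g n ∧ g n ≤ f n} ∪ {n | k n < g n ∧ g n ≤ h n} := by
      intro n ⟨ha, hb⟩
      rcases lt_or_ge (h n) (g n) with hc | hc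
      · exact Or.inl ⟨hc, hb⟩
      · exact Or.inr ⟨ha, hc⟩
    exact (h1.union h2).subset hsub
  have Qtotal : ∀ f ∈ Y, ∀ h ∈ Y, Q f h ∨ Q h f := by
    intro f hf h hh
    rcases hg2 f hf h hh with h1 | h1
    · exact Or.inr h1
    · exact Or.inl h1
  classical
  set r : (ℕ → ℕ) → (ℕ → ℕ) → Prop := WellOrderingRel with hr
  have wf : WellFounded r := IsWellFounded.wf
  set S : Set (ℕ → ℕ) := {f | f ∈ Y ∧ ∀ f' ∈ Y, r f' f → ¬ Q f f'} with hS
  have hSsub : S ⊆ Y := fun f hf => hf.1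
  have hcof : ∀ f ∈ Y, ∃ s ∈ S, Q f s := by
    intro f hf
    set U : Set (ℕ → ℕ) := {h | h ∈ Y ∧ Q f h} with hU
    have hUne : U.Nonempty := ⟨f, hf, Qrefl f⟩
    refine ⟨wf.min U hUne, ⟨(wf.min_mem U hUne).1, ?_⟩, (wf.min_mem U hUne).2⟩
    intro f' hf' hrf' hQf'
    exact wf.not_lt_min U (⟨hf', Qtrans (wf.min_mem U hUne).2 hQf'⟩ : f' ∈ U) hrf'
  have hstrict : ∀ a ∈ S, ∀ b ∈ S, r a b → Q a b ∧ ¬ Q b a := by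
    intro a ha b hb hab
    have hnQ : ¬ Q b a := hb.2 a ha.1 hab
    rcases Qtotal a ha.1 b hb.1 with h | h
    · exact ⟨h, hnQ⟩
    · exact absurd h hnQ
  have hcard : #S < depthPlus.{0} := by
    refine lt_depthPlus_of_chain (Subrel r (· ∈ S)) (fun s => {n | s.1 n < g n})
      (fun s => hg1 s.1 (hSsub s.2)) ?_
    intro a b hab
    obtain ⟨h1, h2⟩ := hstrict a.1 a.2 b.1 b.2 hab
    have e1 : {n | b.1 n < g n} \ {n | a.1 n < g n} = {n | b.1 n < g n ∧ g n ≤ a.1 n} := by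
      ext n; simp [not_lt]
    have e2 : {n | a.1 n < g n} \ {n | b.1 n < g n} = {n | a.1 n < g n ∧ g n ≤ b.1 n} := by
      ext n; simp [not_lt]
    rw [e1, e2]
    exact ⟨h1, h2⟩
  exact ⟨g, S, hSsub, hcard, fun f hf => hg1 f (hSsub hf), hcof⟩

lemma dNum_spec : ∃ D, DominatingFam D ∧ dNum = #D := by
  have hne : {c | ∃ D, DominatingFam D ∧ c = #D}.Nonempty := by
    refine ⟨#(Set.univ : Set (ℕ → ℕ)), Set.univ, fun f => ⟨f, trivial, ?_⟩, rfl⟩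
    have : {n | f n < f n} = ∅ := by ext n; simp
    simp only [LeStar, this, Set.finite_empty]
  exact csInf_mem hne

lemma aleph0_le_dNum : ℵ₀ ≤ dNum := by
  obtain ⟨D, hD, hcard⟩ := dNum_spec
  rw [hcard]
  rcases Set.finite_or_infinite D with hfin | hinf
  · exfalso
    classical
    obtain ⟨h, hh, hle⟩ := hD (fun n => (hfin.toFinset.sup fun q => q n) + 1)
    have huniv : {n | h n < (fun n => (hfin.toFinset.sup fun q => q n) + 1) n} = Set.univ := by
      refine Set.eq_univ_of_forall fun n => ?_
      have hn : h n ≤ hfin.toFinset.sup fun q => q n :=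
        Finset.le_sup (f := fun q => q n) (hfin.mem_toFinset.mpr hh)
      exact Nat.lt_succ_of_le hn
    rw [LeStar, huniv] at hle
    exact Set.infinite_univ hle
  · rw [← Set.infinite_coe_iff] at hinf
    exact Cardinal.aleph0_le_mk D

lemma not_dom_of_lt {D : Set (ℕ → ℕ)} (h : #D < dNum) : ¬ DominatingFam D := by
  intro hdom
  have hmem : #D ∈ {c | ∃ D, DominatingFam D ∧ c = #D} := ⟨D, hdom, rfl⟩
  exact absurd (csInf_le' hmem) h.not_ge

lemma not_dominating_core {ι : Type} (C : ι → Set ℕ) (G : ι → ℕ → ℕ)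
    (hC : ∀ i, (C i).Infinite) (hι : #ι < dNum)
    (D : Set (ℕ → ℕ))
    (hcov : ∀ f ∈ D, ∃ i, {n | n ∈ C i ∧ G i n ≤ f n}.Finite) :
    ¬ DominatingFam D := by
  have hm : ∀ i n, ∃ m, m ∈ C i ∧ n < m := fun i n => by
    obtain ⟨m, hm1, hm2⟩ := (hC i).exists_gt n
    exact ⟨m, hm1, hm2⟩
  choose m hm1 hm2 using hm
  set ψ : ι → ℕ → ℕ := fun i n => G i (m i n) with hψ
  have hrange : ¬ DominatingFam (Set.range ψ) :=
    not_dom_of_lt (lt_of_le_of_lt Cardinal.mk_range_le hι)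
  rw [DominatingFam] at hrange
  push_neg at hrange
  obtain ⟨x, hx⟩ := hrange
  have hx' : ∀ i, {n | ψ i n < x n}.Infinite := fun i => hx (ψ i) ⟨i, rfl⟩
  set x' : ℕ → ℕ := fun n => (Finset.range (n + 1)).sup x with hx'def
  have hmono : ∀ {a b : ℕ}, a ≤ b → x' a ≤ x' b := fun {a b} h =>
    Finset.sup_mono (Finset.range_subset_range.mpr (by omega))
  have hxle : ∀ n, x n ≤ x' n := fun n => Finset.le_sup (Finset.self_mem_range_succ n)
  intro hdom
  obtain ⟨f, hf, hLe⟩ := hdom x'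
  obtain ⟨i, hFfin⟩ := hcov f hf
  obtain ⟨b1, hb1⟩ := hLe.bddAbove
  obtain ⟨b2, hb2⟩ := hFfin.bddAbove
  obtain ⟨n, hn, hngt⟩ := (hx' i).exists_gt (max b1 b2)
  have hmmC : m i n ∈ C i := hm1 i n
  have hnm : n < m i n := hm2 i n
  have h1 : ¬ (m i n ∈ C i ∧ G i (m i n) ≤ f (m i n)) := by
    intro hc
    have := hb2 hc
    omega
  have h2 : f (m i n) < G i (m i n) := not_le.mp fun hle' => h1 ⟨hmmC, hle'⟩
  have h3 : f (m i n) < x' (m i n) := by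
    have hψn : ψ i n < x n := hn
    have := hxle n
    have := hmono hnm.le
    simp only [hψ] at hψn
    omega
  have := hb1 (h3 : m i n ∈ {k | f k < x' k})
  omega

lemma singleton_ClX (f : ℕ → ℕ) : ClX {f} := by
  refine ⟨fun n => f n + 1, fun h hh => ?_, fun a ha b hb => Or.inl ?_⟩
  · rcases Set.mem_singleton_iff.mp hh with rfl
    have : {n | h n < h n + 1} = Set.univ := Set.eq_univ_of_forall fun n => Nat.lt_succ_self _
    rw [this]
    exact Set.infinite_univ
  · have ha' : a = f := ha
    have hb' : b = f := hb
    rw [ha', hb']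
    have : {n | f n < f n + 1 ∧ f n + 1 ≤ f n} = ∅ :=
      Set.eq_empty_iff_forall_notMem.mpr fun n ⟨_, h2⟩ => by omega
    rw [this]
    exact Set.finite_empty

lemma addNum_mem : ∃ Fam : Set (Set (ℕ → ℕ)), (∀ Y ∈ Fam, ClX Y) ∧ ¬ ClD (⋃₀ Fam) ∧
    dNum = #Fam := by
  obtain ⟨D, hD, hcard⟩ := dNum_spec
  refine ⟨(fun f => ({f} : Set (ℕ → ℕ))) '' D, ?_, ?_, ?_⟩
  · rintro Y ⟨f, _, rfl⟩
    exact singleton_ClX f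
  · rw [ClD, not_not, Set.sUnion_image, Set.biUnion_of_singleton]
    exact hD
  · rw [Cardinal.mk_image_eq Set.singleton_injective]
    exact hcard

lemma addNum_le_dNum : addNum ClX ClD ≤ dNum := by
  obtain ⟨Fam, h1, h2, h3⟩ := addNum_mem
  have : (#Fam : Cardinal) ∈ {c | ∃ Fam : Set (Set (ℕ → ℕ)),
      (∀ Y ∈ Fam, ClX Y) ∧ ¬ ClD (⋃₀ Fam) ∧ c = #Fam} := ⟨Fam, h1, h2, rfl⟩
  rw [h3]
  exact csInf_le' this

lemma sum_bound (Fam : Set (Set (ℕ → ℕ))) (hX : ∀ Y ∈ Fam, ClX Y)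
    (hdom : DominatingFam (⋃₀ Fam)) :
    ∃ κ : ↥Fam → Cardinal, (∀ Y, κ Y < depthPlus.{0}) ∧ dNum ≤ Cardinal.sum κ := by
  classical
  choose gY SY hS1 hS2 hS3 hS4 using fun Y : ↥Fam => exists_cofinal_chain Y.1 (hX Y.1 Y.2)
  refine ⟨fun Y => #(SY Y), hS2, ?_⟩
  by_contra hlt
  push_neg at hlt
  have hcard : #((Y : ↥Fam) × ↥(SY Y)) = Cardinal.sum fun Y => #(SY Y) :=
    Cardinal.mk_sigma _
  refine not_dominating_core (fun p : (Y : ↥Fam) × ↥(SY Y) => {n | p.2.1 n < gY p.1 n})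
    (fun p => gY p.1) (fun p => hS3 p.1 p.2.1 p.2.2) (by rw [hcard]; exact hlt)
    (⋃₀ Fam) ?_ hdom
  intro f hf
  obtain ⟨Y, hY, hfY⟩ := hf
  obtain ⟨s, hs, hfin⟩ := hS4 ⟨Y, hY⟩ f hfY
  exact ⟨⟨⟨Y, hY⟩, ⟨s, hs⟩⟩, hfin⟩

theorem stmt18 :
    (depthPlus < dNum → addNum ClX ClD = dNum) ∧
    (depthPlus = dNum → dNum.ord.cof ≤ addNum ClX ClD) := by
  have hne : {c | ∃ Fam : Set (Set (ℕ → ℕ)),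
      (∀ Y ∈ Fam, ClX Y) ∧ ¬ ClD (⋃₀ Fam) ∧ c = #Fam}.Nonempty := by
    obtain ⟨Fam, h1, h2, _⟩ := addNum_mem
    exact ⟨#Fam, Fam, h1, h2, rfl⟩
  constructor
  · intro hd
    refine le_antisymm addNum_le_dNum (le_csInf hne ?_)
    rintro c ⟨Fam, hX, hnD, rfl⟩
    obtain ⟨κ, hκ, hsum⟩ := sum_bound Fam hX (not_not.mp hnD)
    by_contra hc
    push_neg at hc
    have h1 : Cardinal.sum κ ≤ #Fam * depthPlus.{0} := by
      calc Cardinal.sum κ ≤ Cardinal.sum (fun _ : ↥Fam => depthPlus.{0}) :=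
            Cardinal.sum_le_sum _ _ fun Y => (hκ Y).le
        _ = #Fam * depthPlus.{0} := Cardinal.sum_const' _ _
    exact absurd (hsum.trans h1) (Cardinal.mul_lt_of_lt aleph0_le_dNum hc hd).not_ge
  · intro hd
    refine le_csInf hne ?_
    rintro c ⟨Fam, hX, hnD, rfl⟩
    obtain ⟨κ, hκ, hsum⟩ := sum_bound Fam hX (not_not.mp hnD)
    by_contra hc
    push_neg at hc
    have hsup : iSup κ < dNum := Ordinal.iSup_lt hc fun Y => hd ▸ hκ Y
    have h1 : Cardinal.sum κ ≤ #Fam * iSup κ := Cardinal.sum_le_mk_mul_iSup κ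
    have h2 : #Fam * iSup κ < dNum :=
      Cardinal.mul_lt_of_lt aleph0_le_dNum (hc.trans_le (Ordinal.cof_ord_le dNum)) hsup
    exact absurd (hsum.trans h1) h2.not_ge
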